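/- arXiv:1205.5247 — 2 statements merged into one kernel-verified Lean document; each statement's English description precedes it below -/
import Mathlib

section
/- Let M be a matroid on a finite linearly ordered set E and p ≥ 0. Then d^p/dx^p [t(M; x, x)] = p! Σ_A x^{ι_M(A)+ε_M(A)}, where the sum is over all A ⊆ E with cr_M(A) + nl_M(A) = p. -/
open Set

/-- `e` is the smallest element of `C`. -/
def SmallestIn {α : Type*} [LinearOrder α] (e : α) (C : Set α) : Prop :=
  e ∈ C ∧ ∀ f ∈ C, e ≤ f

/-- `C` is a circuit of `M`: a minimal dependent set. -/
def IsCircuit {α : Type*} (M : Matroid α) (C : Set α) : Prop :=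
  ¬ M.Indep C ∧ ∀ x ∈ C, M.Indep (C \ {x})

/-- A cocircuit is a circuit of the dual matroid. -/
def IsCocircuit {α : Type*} (M : Matroid α) (C : Set α) : Prop :=
  IsCircuit M✶ C

/-- `P_M(A)`: elements outside `A` that are smallest in some cocircuit avoiding `A`. -/
def Pset {α : Type*} [LinearOrder α] (M : Matroid α) (A : Set α) : Set α :=
  {e | e ∉ A ∧ ∃ C, IsCocircuit M C ∧ C ⊆ Aᶜ ∧ SmallestIn e C}

/-- `Q_M(A)`: elements of `A` that are smallest in some circuit contained in `A`. -/
def Qset {α : Type*} [LinearOrder α] (M : Matroid α) (A : Set α) : Set α :=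
  {e | e ∈ A ∧ ∃ C, IsCircuit M C ∧ C ⊆ A ∧ SmallestIn e C}

/-- Externally active elements of `A`. -/
def ExtSet {α : Type*} [LinearOrder α] (M : Matroid α) (A : Set α) : Set α :=
  {e | e ∉ A ∧ ∃ C, IsCircuit M C ∧ C ⊆ A ∪ {e} ∧ SmallestIn e C}

/-- Internally active elements of `A`. -/
def IntSet {α : Type*} [LinearOrder α] (M : Matroid α) (A : Set α) : Set α :=
  {e | e ∈ A ∧ ∃ C, IsCocircuit M C ∧ C ⊆ Aᶜ ∪ {e} ∧ SmallestIn e C}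

/-- The rank of a set: the largest cardinality of an independent subset. -/
noncomputable def rk {α : Type*} (M : Matroid α) (A : Set α) : ℕ :=
  sSup (Set.ncard '' {I | I ⊆ A ∧ M.Indep I})

/-- Matroid perspective (strong-map / quotient condition, form (MP3)). -/
def Perspective {α : Type*} (M M' : Matroid α) : Prop :=
  ∀ C D : Set α, IsCircuit M C → IsCocircuit M' D → (C ∩ D).ncard ≠ 1

/-- Rank codrop of a subset in a matroid perspective. -/
noncomputable def rcd {α : Type*} (M M' : Matroid α) (A : Set α) : ℕ :=
  ((rk M Set.univ : ℤ) - rk M' Set.univ - ((rk M A : ℤ) - rk M' A)).toNat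

/-- The one-variable specialization `t(M; x, x)` of the Tutte polynomial. -/
noncomputable def tutteDiag {α : Type*} [Fintype α] (M : Matroid α) : Polynomial ℤ :=
  ∑ A ∈ (Finset.univ : Finset α).powerset,
    (Polynomial.X - 1) ^ (rk M Set.univ - rk M (A : Set α)) *
      (Polynomial.X - 1) ^ (A.card - rk M (A : Set α))

/-!
Write `SpannedAbove M A a` for `a ∈ cl(A ∩ (a, ∞))`. Then `Q(A)` and `Ext(A)` are the elements
of `A`, resp. of `Aᶜ`, spanned from above by `A`, and `P(A)`, `Int(A)` are the same notions for
`Aᶜ` in the dual matroid. Orthogonality of circuits and cocircuits shows that `A \ Q(A)` is a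
basis of `A`, that `(A \ Q(A)) ∪ P(A)` is a base, and that this base is `B` exactly when `A` lies
in the interval `[B \ Int(B), B ∪ Ext(B)]`; so these intervals partition the subsets of `E`.
On the interval of `B`, writing `A = B ∆ U` with `U ⊆ Int(B) ∪ Ext(B)`, the corank plus nullity
of `A` is `|U|` and `ι(A) + ε(A) = ι(B) + ε(B) - |U|`. Hence `t(M; x, x) = Σ_B x ^ (ι(B) + ε(B))`,
and both sides of the identity equal `Σ_B p! * C(ι(B) + ε(B), p) * x ^ (ι(B) + ε(B) - p)`.
-/

namespace MatroidActivity

open scoped symmDiff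

variable {α : Type*} {M : Matroid α} {A B C I X Y S : Set α} {a t : α}

lemma isCircuit_iff (hE : M.E = univ) : IsCircuit M C ↔ M.IsCircuit C := by
  rw [Matroid.isCircuit_iff_dep_forall_sdiff_singleton_indep, Matroid.dep_iff, hE, IsCircuit]
  simp only [subset_univ, and_true]

lemma dual_ground_eq_univ (hE : M.E = univ) : M✶.E = univ := by
  rwa [Matroid.dual_ground]

lemma isBase_compl_dual (hE : M.E = univ) (hB : M.IsBase B) : M✶.IsBase Bᶜ := by
  simpa [hE, ← compl_eq_univ_sdiff] using hB.compl_isBase_dual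

lemma rk_eq_ncard_of_isBasis [Finite α] (hI : M.IsBasis I X) : rk M X = I.ncard := by
  refine le_antisymm (csSup_le ⟨0, ∅, ⟨empty_subset _, M.empty_indep⟩, by simp⟩ ?_)
    (le_csSup ⟨(univ : Set α).ncard, ?_⟩ ⟨I, ⟨hI.subset, hI.indep⟩, rfl⟩)
  · rintro _ ⟨J, ⟨hJX, hJ⟩, rfl⟩
    obtain ⟨J', hJ', hJJ'⟩ := hJ.subset_isBasis_of_subset hJX hI.subset_ground
    calc J.ncard ≤ J'.ncard := ncard_le_ncard hJJ'
      _ = I.ncard := by rw [ncard_def, hJ'.encard_eq_encard hI, ← ncard_def]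
  · rintro _ ⟨J, _, rfl⟩
    exact ncard_le_ncard (subset_univ J)

lemma rk_univ_eq_ncard [Finite α] (hE : M.E = univ) (hB : M.IsBase B) : rk M univ = B.ncard :=
  rk_eq_ncard_of_isBasis (hE ▸ hB.isBasis_ground)

/-- Orthogonality of circuits and cocircuits, in terms of closures. -/
lemma notMem_closure_of_mem_dual_closure (hXY : Disjoint X Y) (hX : a ∉ X) (hY : a ∉ Y)
    (ha : a ∈ M✶.closure X) : a ∉ M.closure Y := by
  intro ha'
  obtain ⟨D, hDX, hD, haD⟩ := Matroid.exists_isCircuit_of_mem_closure ha hX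
  obtain ⟨C, hCY, hC, haC⟩ := Matroid.exists_isCircuit_of_mem_closure ha' hY
  refine hC.inter_isCocircuit_ne_singleton (K := D) hD
    (subset_antisymm (fun y ⟨hyC, hyD⟩ => ?_) (singleton_subset_iff.2 ⟨haC, haD⟩))
  obtain rfl | hyY := hCY hyC
  · rfl
  obtain rfl | hyX := hDX hyD
  · rfl
  exact absurd hyY (hXY.notMem_of_mem_left hyX)

variable [LinearOrder α]

def SpannedAbove (M : Matroid α) (A : Set α) (a : α) : Prop :=
  a ∈ M.closure (A ∩ Ioi a)

lemma SpannedAbove.mono (h : SpannedAbove M A a) (hAB : A ⊆ B) : SpannedAbove M B a :=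
  M.closure_subset_closure (inter_subset_inter_left _ hAB) h

lemma SpannedAbove.notMem (h : SpannedAbove M X a) (hI : M.Indep I) (hXI : X ⊆ I) : a ∉ I :=
  fun haI => hI.notMem_closure_sdiff_of_mem haI <|
    M.closure_subset_closure (fun y (hy : y ∈ X ∩ Ioi a) => show y ∈ I \ {a} from
      ⟨hXI hy.1, hy.2.ne'⟩) h

lemma exists_isCircuit_smallestIn_iff :
    (∃ C, M.IsCircuit C ∧ C ⊆ insert a A ∧ SmallestIn a C) ↔ SpannedAbove M A a := by
  constructor
  · rintro ⟨C, hC, hCA, haC, hmin⟩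
    refine M.closure_subset_closure (fun y (hy : y ∈ C \ {a}) => ?_)
      (hC.mem_closure_sdiff_singleton_of_mem haC)
    exact ⟨(hCA hy.1).resolve_left hy.2, (hmin y hy.1).lt_of_ne' hy.2⟩
  · intro h
    obtain ⟨C, hCA, hC, haC⟩ := Matroid.exists_isCircuit_of_mem_closure h (fun h => h.2.false)
    refine ⟨C, hC, hCA.trans (insert_subset_insert inter_subset_left), haC, fun y hy => ?_⟩
    obtain rfl | hy := hCA hy
    exacts [le_rfl, hy.2.le]

lemma mem_Qset_iff (hE : M.E = univ) : a ∈ Qset M A ↔ a ∈ A ∧ SpannedAbove M A a := by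
  refine and_congr_right fun haA => ?_
  simp_rw [isCircuit_iff hE, ← exists_isCircuit_smallestIn_iff, insert_eq_of_mem haA]

lemma mem_ExtSet_iff (hE : M.E = univ) : a ∈ ExtSet M A ↔ a ∉ A ∧ SpannedAbove M A a := by
  refine and_congr_right fun _ => ?_
  simp_rw [isCircuit_iff hE, ← exists_isCircuit_smallestIn_iff, union_singleton]

lemma Pset_eq_Qset_dual : Pset M A = Qset M✶ Aᶜ := rfl

lemma IntSet_eq_ExtSet_dual : IntSet M A = ExtSet M✶ Aᶜ := by
  ext; simp [IntSet, ExtSet, IsCocircuit]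

/-- A circuit through `t` inside `insert t (B ∩ Ioi t)` cannot contain any `u ∈ S`: together with
a cocircuit through `u` inside `insert u (Bᶜ ∩ Ioi u)` it would meet only in `u`. -/
lemma SpannedAbove.sdiff (ht : SpannedAbove M B t) (hS : ∀ u ∈ S, SpannedAbove M✶ Bᶜ u) :
    SpannedAbove M (B \ S) t := by
  obtain ⟨C, hCB, hC, htC⟩ := Matroid.exists_isCircuit_of_mem_closure ht (fun h => h.2.false)
  refine M.closure_subset_closure (fun u (hu : u ∈ C \ {t}) => ?_)
    (hC.mem_closure_sdiff_singleton_of_mem htC)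
  obtain ⟨huB, htu⟩ : u ∈ B ∧ t < u := (hCB hu.1).resolve_left hu.2
  refine ⟨⟨huB, fun huS => ?_⟩, htu⟩
  refine notMem_closure_of_mem_dual_closure (Y := C \ {u}) ?_ (fun h => h.1 huB)
    (fun h => h.2 rfl) (hS u huS) (hC.mem_closure_sdiff_singleton_of_mem hu.1)
  refine disjoint_left.2 fun y ⟨hyB, huy⟩ ⟨hyC, _⟩ => ?_
  obtain rfl | hy := hCB hyC
  exacts [huy.not_gt htu, hyB hy.1]

lemma mem_Pset_iff (hE : M.E = univ) : a ∈ Pset M A ↔ a ∉ A ∧ SpannedAbove M✶ Aᶜ a :=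
  mem_Qset_iff (dual_ground_eq_univ hE)

lemma mem_IntSet_iff (hE : M.E = univ) : a ∈ IntSet M A ↔ a ∈ A ∧ SpannedAbove M✶ Aᶜ a := by
  rw [IntSet_eq_ExtSet_dual, mem_ExtSet_iff (dual_ground_eq_univ hE), notMem_compl_iff]

def activeBase (M : Matroid α) (A : Set α) : Set α :=
  (A \ Qset M A) ∪ Pset M A

lemma compl_activeBase : (activeBase M A)ᶜ = activeBase M✶ Aᶜ := by
  rw [activeBase, activeBase, ← Pset_eq_Qset_dual, Pset_eq_Qset_dual (M := M✶),
    Matroid.dual_dual, compl_compl]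
  ext x
  have hQ : x ∈ Qset M A → x ∈ A := fun h => h.1
  have hP : x ∈ Pset M A → x ∉ A := fun h => h.1
  simp only [mem_compl_iff, mem_union, mem_sdiff]
  tauto

def activeInterval (M : Matroid α) (B : Set α) : Set (Set α) :=
  Icc (B \ IntSet M B) (B ∪ ExtSet M B)

def activeSet (M : Matroid α) (B : Set α) : Set α :=
  IntSet M B ∪ ExtSet M B

lemma symmDiff_subset_activeSet_iff :
    B ∆ A ⊆ activeSet M B ↔ A ∈ activeInterval M B := by
  have hInt : IntSet M B ⊆ B := fun _ h => h.1
  have hExt : Disjoint (ExtSet M B) B := disjoint_left.2 fun _ h => h.1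
  simp only [activeInterval, activeSet, mem_Icc, subset_def, mem_symmDiff, mem_union, mem_sdiff]
  grind

lemma compl_mem_activeInterval_dual (hA : A ∈ activeInterval M B) :
    Aᶜ ∈ activeInterval M✶ Bᶜ := by
  rw [activeInterval, IntSet_eq_ExtSet_dual (M := M✶), Matroid.dual_dual, compl_compl,
    ← IntSet_eq_ExtSet_dual]
  refine ⟨fun x hx hxA => hx.2 ((hA.2 hxA).resolve_left hx.1), fun x hxA => by_contra fun hx => ?_⟩
  exact hxA (hA.1 ⟨not_not.1 fun h => hx (.inl h), fun h => hx (.inr h)⟩)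

lemma SpannedAbove.of_mem_activeInterval (hE : M.E = univ) (hA : A ∈ activeInterval M B)
    (h : SpannedAbove M B t) : SpannedAbove M A t :=
  have hS : ∀ u ∈ B \ A, SpannedAbove M✶ Bᶜ u := fun _ hu =>
    ((mem_IntSet_iff hE).1 (sdiff_subset_comm.1 hA.1 hu)).2
  (h.sdiff hS).mono fun _ hx => by_contra fun hxA => hx.2 ⟨hx.1, hxA⟩

section Finite

variable [Finite α]

lemma mem_closure_sdiff_Qset_inter_Ici (hE : M.E = univ) (ha : a ∈ A) :
    a ∈ M.closure ((A \ Qset M A) ∩ Ici a) := by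
  induction a using WellFoundedGT.induction with
  | _ a IH =>
    by_cases haQ : a ∈ Qset M A
    · have hspan : A ∩ Ioi a ⊆ M.closure ((A \ Qset M A) ∩ Ioi a) := fun y hy =>
        M.closure_subset_closure (inter_subset_inter_right _ (Ici_subset_Ioi.2 hy.2))
          (IH y hy.2 hy.1)
      exact M.closure_subset_closure (inter_subset_inter_right _ Ioi_subset_Ici_self)
        (M.closure_subset_closure_of_subset_closure hspan ((mem_Qset_iff hE).1 haQ).2)
    · exact M.subset_closure _ (hE ▸ subset_univ _) ⟨⟨ha, haQ⟩, self_mem_Ici⟩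

lemma spannedAbove_sdiff_Qset_iff (hE : M.E = univ) :
    SpannedAbove M (A \ Qset M A) a ↔ SpannedAbove M A a := by
  refine ⟨fun h => h.mono sdiff_subset, fun h => ?_⟩
  refine M.closure_subset_closure_of_subset_closure (fun y hy => ?_) h
  exact M.closure_subset_closure (inter_subset_inter_right _ (Ici_subset_Ioi.2 hy.2))
    (mem_closure_sdiff_Qset_inter_Ici hE hy.1)

lemma indep_sdiff_Qset (hE : M.E = univ) : M.Indep (A \ Qset M A) := by
  by_contra hdep
  rw [Matroid.not_indep_iff (hE ▸ subset_univ _)] at hdep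
  obtain ⟨C, hCA, hC⟩ := hdep.exists_isCircuit_subset
  obtain ⟨x, hxC, hmin⟩ := exists_min_image C id C.toFinite hC.nonempty
  refine (hCA hxC).2 ((mem_Qset_iff hE).2 ⟨(hCA hxC).1, ?_⟩)
  exact (exists_isCircuit_smallestIn_iff.1
    ⟨C, hC, hCA.trans (subset_insert _ _), hxC, hmin⟩).mono sdiff_subset

lemma isBasis_sdiff_Qset (hE : M.E = univ) : M.IsBasis (A \ Qset M A) A :=
  (indep_sdiff_Qset hE).isBasis_of_subset_of_subset_closure sdiff_subset fun _ hy =>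
    M.closure_subset_closure inter_subset_left (mem_closure_sdiff_Qset_inter_Ici hE hy)

lemma activeBase_indep (hE : M.E = univ) : M.Indep (activeBase M A) := by
  by_contra hdep
  rw [Matroid.not_indep_iff (hE ▸ subset_univ _)] at hdep
  obtain ⟨C, hCA, hC⟩ := hdep.exists_isCircuit_subset
  have hCP : (C ∩ Pset M A).Nonempty := by
    by_contra! hCP
    refine hC.dep.not_indep ((indep_sdiff_Qset (A := A) hE).subset fun y hy => ?_)
    exact (hCA hy).resolve_right fun hyP => hCP.subset ⟨hy, hyP⟩
  obtain ⟨e, ⟨heC, heP⟩, hmax⟩ := exists_max_image _ id (toFinite _) hCP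
  obtain ⟨heA, he⟩ := (mem_Pset_iff hE).1 heP
  -- `e` is the largest element of `C` outside `A`, so `C \ {e}` misses `Aᶜ ∩ Ioi e`.
  refine notMem_closure_of_mem_dual_closure (Y := C \ {e}) ?_ (fun h => h.2.false)
    (fun h => h.2 rfl) he (hC.mem_closure_sdiff_singleton_of_mem heC)
  refine disjoint_left.2 fun y ⟨hyA, hye⟩ ⟨hyC, _⟩ => ?_
  obtain hyQ | hyP := hCA hyC
  · exact hyA hyQ.1
  · exact (hmax y ⟨hyC, hyP⟩).not_gt hye

lemma activeBase_isBase (hE : M.E = univ) : M.IsBase (activeBase M A) := by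
  obtain ⟨B, hB, hBA⟩ := (Matroid.coindep_iff_exists (hE ▸ subset_univ _)).1 <|
    show M✶.Indep (activeBase M A)ᶜ by
      rw [compl_activeBase]; exact activeBase_indep (dual_ground_eq_univ hE)
  rw [hE, ← compl_eq_univ_sdiff, compl_compl] at hBA
  rwa [← hB.eq_of_subset_indep (activeBase_indep hE) hBA]

lemma Qset_eq_of_mem_activeInterval (hE : M.E = univ) (hB : M.Indep B)
    (hA : A ∈ activeInterval M B) : Qset M A = A \ B := by
  have hsup : A \ B ⊆ Qset M A := fun t ht => (mem_Qset_iff hE).2 ⟨ht.1,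
    ((mem_ExtSet_iff hE).1 (sdiff_subset_iff.2 hA.2 ht)).2.of_mem_activeInterval hE hA⟩
  refine subset_antisymm (fun q hq => ⟨hq.1, ?_⟩) hsup
  exact ((spannedAbove_sdiff_Qset_iff hE).2 ((mem_Qset_iff hE).1 hq).2).notMem hB
    fun x hx => by_contra fun hxB => hx.2 (hsup ⟨hx.1, hxB⟩)

lemma spannedAbove_iff_of_mem_activeInterval (hE : M.E = univ) (hB : M.Indep B)
    (hA : A ∈ activeInterval M B) : SpannedAbove M A t ↔ t ∉ B ∧ SpannedAbove M B t := by
  refine ⟨fun h => ?_, fun h => h.2.of_mem_activeInterval hE hA⟩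
  have hAB : A \ Qset M A ⊆ B := by
    rw [Qset_eq_of_mem_activeInterval hE hB hA]
    exact fun x hx => by_contra fun hxB => hx.2 ⟨hx.1, hxB⟩
  have h' := (spannedAbove_sdiff_Qset_iff hE).2 h
  exact ⟨h'.notMem hB hAB, h'.mono hAB⟩

lemma ExtSet_eq_of_mem_activeInterval (hE : M.E = univ) (hB : M.Indep B)
    (hA : A ∈ activeInterval M B) : ExtSet M A = ExtSet M B \ A := by
  ext t
  simp only [mem_ExtSet_iff hE, spannedAbove_iff_of_mem_activeInterval hE hB hA, mem_sdiff]
  tauto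

lemma IntSet_eq_of_mem_activeInterval (hE : M.E = univ) (hB : M.IsBase B)
    (hA : A ∈ activeInterval M B) : IntSet M A = IntSet M B ∩ A := by
  rw [IntSet_eq_ExtSet_dual, ExtSet_eq_of_mem_activeInterval (dual_ground_eq_univ hE)
    (isBase_compl_dual hE hB).indep (compl_mem_activeInterval_dual hA), ← IntSet_eq_ExtSet_dual,
    Set.sdiff_compl]

lemma activeBase_eq_of_mem_activeInterval (hE : M.E = univ) (hB : M.IsBase B)
    (hA : A ∈ activeInterval M B) : activeBase M A = B := by
  rw [activeBase, Pset_eq_Qset_dual, Qset_eq_of_mem_activeInterval (dual_ground_eq_univ hE)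
    (isBase_compl_dual hE hB).indep (compl_mem_activeInterval_dual hA),
    Qset_eq_of_mem_activeInterval hE hB.indep hA, compl_sdiff_compl]
  ext x
  simp only [mem_union, mem_sdiff]
  tauto

lemma subset_activeBase_union_ExtSet (hE : M.E = univ) :
    A ⊆ activeBase M A ∪ ExtSet M (activeBase M A) := by
  intro q hqA
  by_cases hq : q ∈ Qset M A
  · refine .inr ((mem_ExtSet_iff hE).2 ⟨?_, ?_⟩)
    · rintro (h | h)
      exacts [h.2 hq, h.1 hqA]
    · exact ((spannedAbove_sdiff_Qset_iff hE).2 ((mem_Qset_iff hE).1 hq).2).mono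
        subset_union_left
  · exact .inl (.inl ⟨hqA, hq⟩)

lemma mem_activeInterval_activeBase (hE : M.E = univ) :
    A ∈ activeInterval M (activeBase M A) := by
  refine ⟨fun x hx => by_contra fun hxA => ?_, subset_activeBase_union_ExtSet hE⟩
  have hdual := subset_activeBase_union_ExtSet (A := Aᶜ) (dual_ground_eq_univ hE) hxA
  rw [← compl_activeBase, ← IntSet_eq_ExtSet_dual] at hdual
  exact hdual.elim (· hx.1) hx.2

lemma rk_eq_ncard_inter_of_mem_activeInterval (hE : M.E = univ) (hB : M.Indep B)
    (hA : A ∈ activeInterval M B) : rk M A = (A ∩ B).ncard := by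
  have hbasis := isBasis_sdiff_Qset (A := A) hE
  rw [Qset_eq_of_mem_activeInterval hE hB hA, sdiff_sdiff_right_self] at hbasis
  exact rk_eq_ncard_of_isBasis hbasis

lemma corank_add_nullity_of_mem_activeInterval (hE : M.E = univ) (hB : M.IsBase B)
    (hA : A ∈ activeInterval M B) :
    (rk M univ - rk M A) + (A.ncard - rk M A) = (B ∆ A).ncard := by
  rw [rk_univ_eq_ncard hE hB, rk_eq_ncard_inter_of_mem_activeInterval hE hB.indep hA,
    Set.symmDiff_def, ncard_union_eq disjoint_sdiff_sdiff,
    ← ncard_inter_add_ncard_sdiff_eq_ncard B A, ← ncard_inter_add_ncard_sdiff_eq_ncard A B,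
    inter_comm]
  omega

lemma activity_of_mem_activeInterval (hE : M.E = univ) (hB : M.IsBase B)
    (hA : A ∈ activeInterval M B) :
    (IntSet M A).ncard + (ExtSet M A).ncard = (activeSet M B).ncard - (B ∆ A).ncard := by
  have hInt : IntSet M B ⊆ B := fun _ h => h.1
  have hExt : Disjoint (ExtSet M B) B := disjoint_left.2 fun _ h => h.1
  have hunion : IntSet M A ∪ ExtSet M A = activeSet M B \ B ∆ A := by
    rw [IntSet_eq_of_mem_activeInterval hE hB hA, ExtSet_eq_of_mem_activeInterval hE hB.indep hA]
    ext x
    simp only [activeSet, mem_union, mem_inter_iff, mem_sdiff, mem_symmDiff]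
    grind
  rw [← ncard_union_eq (disjoint_left.2 fun _ h h' => h'.1 h.1), hunion,
    ncard_sdiff (symmDiff_subset_activeSet_iff.2 hA)]

end Finite

section Fintype

variable [Fintype α] {B U : Finset α}

lemma coe_symmDiff_mem_activeInterval (hU : U ∈ (activeSet M B).toFinite.toFinset.powerset) :
    (↑(B ∆ U) : Set α) ∈ activeInterval M B := by
  rw [← symmDiff_subset_activeSet_iff, Finset.coe_symmDiff, symmDiff_symmDiff_cancel_left]
  simpa using hU

lemma corank_add_nullity_symmDiff (hE : M.E = univ) (hB : M.IsBase B)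
    (hU : U ∈ (activeSet M B).toFinite.toFinset.powerset) :
    rk M univ - rk M ↑(B ∆ U) + ((B ∆ U).card - rk M ↑(B ∆ U)) = U.card := by
  rw [← ncard_coe_finset (B ∆ U), corank_add_nullity_of_mem_activeInterval hE hB
    (coe_symmDiff_mem_activeInterval hU), Finset.coe_symmDiff, symmDiff_symmDiff_cancel_left,
    ncard_coe_finset]

lemma activity_symmDiff (hE : M.E = univ) (hB : M.IsBase B)
    (hU : U ∈ (activeSet M B).toFinite.toFinset.powerset) :
    (IntSet M ↑(B ∆ U)).ncard + (ExtSet M ↑(B ∆ U)).ncard =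
      (activeSet M B).toFinite.toFinset.card - U.card := by
  rw [activity_of_mem_activeInterval hE hB (coe_symmDiff_mem_activeInterval hU),
    Finset.coe_symmDiff, symmDiff_symmDiff_cancel_left, ncard_coe_finset,
    ncard_eq_toFinset_card _ (toFinite _)]

open Classical in
lemma sum_powerset_eq_sum_isBase {R : Type*} [AddCommMonoid R] (hE : M.E = univ)
    (f : Finset α → R) :
    ∑ A ∈ Finset.univ.powerset, f A =
      ∑ B ∈ Finset.univ.filter (fun B : Finset α => M.IsBase B),
        ∑ U ∈ (activeSet M B).toFinite.toFinset.powerset, f (B ∆ U) := by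
  rw [Finset.sum_sigma']
  refine Finset.sum_nbij' (fun A => ⟨(activeBase M A).toFinite.toFinset,
    (activeBase M A).toFinite.toFinset ∆ A⟩) (fun x => x.1 ∆ x.2) (fun A _ => ?_)
    (fun _ _ => by simp) (fun A _ => by simp) (fun ⟨B, U⟩ hBU => ?_) (fun A _ => by simp)
  · simp only [Finset.mem_sigma, Finset.mem_filter, Finset.mem_univ, true_and,
      Finset.mem_powerset, Set.Finite.subset_toFinset, Finset.coe_symmDiff,
      Set.Finite.coe_toFinset]
    exact ⟨activeBase_isBase hE,
      symmDiff_subset_activeSet_iff.2 (mem_activeInterval_activeBase hE)⟩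
  · simp only [Finset.mem_sigma, Finset.mem_filter, Finset.mem_univ, true_and] at hBU
    have hbase : (activeBase M ↑(B ∆ U)).toFinite.toFinset = B := Finset.coe_injective <| by
      rw [Set.Finite.coe_toFinset,
        activeBase_eq_of_mem_activeInterval hE hBU.1 (coe_symmDiff_mem_activeInterval hBU.2)]
    simp only [hbase, symmDiff_symmDiff_cancel_left]

end Fintype

lemma sum_powerset_ite_card_eq {ι R : Type*} [Semiring R] (s : Finset ι) (p : ℕ) (x : R) :
    ∑ U ∈ s.powerset, (if U.card = p then x ^ (s.card - U.card) else 0) =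
      s.card.choose p • x ^ (s.card - p) := by
  rw [← Finset.sum_filter, ← Finset.powersetCard_eq_filter,
    Finset.sum_powersetCard p s (fun k => x ^ (s.card - k))]

end MatroidActivity

open MatroidActivity Polynomial symmDiff in
theorem tutteDiag_derivative {α : Type*} [Fintype α] [LinearOrder α]
    (M : Matroid α) (hE : M.E = Set.univ) (p : ℕ) :
    (⇑(Polynomial.derivative (R := ℤ)))^[p] (tutteDiag M) =
      (p.factorial : ℤ) •
        ∑ A ∈ Finset.univ.powerset.filter
            (fun A : Finset α =>
              (rk M Set.univ - rk M (A : Set α)) + (A.card - rk M (A : Set α)) = p),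
          Polynomial.X ^ ((IntSet M (A : Set α)).ncard + (ExtSet M (A : Set α)).ncard) := by
  classical
  rw [tutteDiag, Finset.sum_filter, sum_powerset_eq_sum_isBase hE,
    sum_powerset_eq_sum_isBase hE, iterate_derivative_sum, Finset.smul_sum]
  refine Finset.sum_congr rfl fun B hB => ?_
  replace hB : M.IsBase B := (Finset.mem_filter.1 hB).2
  set s := (activeSet M B).toFinite.toFinset
  calc derivative^[p] (∑ U ∈ s.powerset, (X - 1) ^ (rk M univ - rk M ↑(B ∆ U)) *
        (X - 1) ^ ((B ∆ U).card - rk M ↑(B ∆ U)))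
      = derivative^[p] (∑ U ∈ s.powerset, (X - 1) ^ U.card * 1 ^ (s.card - U.card)) := by
        congr 1
        refine Finset.sum_congr rfl fun U hU => ?_
        rw [← pow_add, corank_add_nullity_symmDiff hE hB hU, one_pow, mul_one]
    _ = (s.card.descFactorial p : ℤ[X]) * X ^ (s.card - p) := by
        rw [Finset.sum_pow_mul_eq_add_pow, sub_add_cancel, iterate_derivative_X_pow_eq_natCast_mul]
    _ = (p.factorial : ℤ) • ∑ U ∈ s.powerset,
          (if U.card = p then (X : ℤ[X]) ^ (s.card - U.card) else 0) := by
        rw [sum_powerset_ite_card_eq, Nat.descFactorial_eq_factorial_mul_choose, nsmul_eq_mul,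
          zsmul_eq_mul]
        push_cast
        ring
    _ = _ := by
        congr 1
        refine Finset.sum_congr rfl fun U hU => ?_
        rw [corank_add_nullity_symmDiff hE hB hU, activity_symmDiff hE hB hU]
end

section
/- Let M → M' be a matroid perspective on a finite linearly ordered set E and A ⊆ E. Set A' = (A \ Q_M(A)) ∪ Ext_M(A). Then P_{M'}(A') = P_{M'}(A), Int_{M'}(A') = Int_{M'}(A), Q_M(A') = Ext_M(A), and Ext_M(A') = Q_M(A). In particular the map A ↦ (A \ Q_M(A)) ∪ Ext_M(A) is an involution of 2^E exchanging the nullity nl_M(A) = |Q_M(A)| and the external activity ε_M(A) = |Ext_M(A)|. -/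
/-!
Write `S(A)` for the set of elements `e` spanned in `M` by the elements of `A` larger than `e`.
A circuit whose smallest element is `e` is exactly a witness of `e ∈ S(A)`, so
`Q_M(A) = A ∩ S(A)`, `Ext_M(A) = S(A) \ A` and `A' = A ∆ S(A)`. Dually, a cocircuit of `M'`
smallest at `e` and avoiding `A \ {e}` witnesses that `e` is outside the `M'`-closure of
`(A ∩ (e, ∞)) ∪ (-∞, e)`.

By downward induction on `e`, `A` and `A'` have the same `M`-closure above every `e`, hence
`S(A') = S(A)`, and the claims about `Q`, `Ext` and the involution are set algebra. In a
perspective every `M`-closure lies in the corresponding `M'`-closure, so the `M'`-closures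
above agree as well, and an element outside such an `M'`-closure is not in `S(A)`, so it belongs
to `A'` iff it belongs to `A`: this gives the claims about `P` and `Int`.
-/

open Set

open Matroid hiding IsCircuit IsCocircuit

section

variable {α : Type*} {M M' : Matroid α} {A X Y C K : Set α} {e : α}

lemma isCircuit_iff_matroid_isCircuit (hC : C ⊆ M.E) : IsCircuit M C ↔ M.IsCircuit C := by
  rw [IsCircuit, isCircuit_iff_dep_forall_sdiff_singleton_indep, Dep, and_iff_left hC]

lemma isCocircuit_iff_matroid_isCocircuit (hK : K ⊆ M.E) : IsCocircuit M K ↔ M.IsCocircuit K :=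
  isCircuit_iff_matroid_isCircuit (M := M✶) hK

lemma inter_eq_singleton_of_subset_insert_of_subset_compl (hCX : C ⊆ insert e X)
    (hKX : K ⊆ Xᶜ) (heC : e ∈ C) (heK : e ∈ K) : C ∩ K = {e} := by
  refine subset_antisymm ?_ (by simp [heC, heK])
  rintro f ⟨hfC, hfK⟩
  exact (hCX hfC).resolve_right (hKX hfK)

lemma Matroid.notMem_closure_iff_exists_isCocircuit (heE : e ∈ M.E) :
    e ∉ M.closure X ↔ ∃ K, M.IsCocircuit K ∧ e ∈ K ∧ K ⊆ Xᶜ := by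
  constructor
  · intro he
    obtain ⟨K, hK, heK⟩ := (contract_isNonloop_iff.2 ⟨heE, he⟩).exists_mem_isCocircuit
    rw [contract_isCocircuit_iff, ← subset_compl_iff_disjoint_right] at hK
    exact ⟨K, hK.1, heK, hK.2⟩
  · rintro ⟨K, hK, heK, hKX⟩ he
    obtain ⟨C, hCX, hC, heC⟩ := exists_isCircuit_of_mem_closure he (hKX heK)
    exact hC.inter_isCocircuit_ne_singleton hK
      (inter_eq_singleton_of_subset_insert_of_subset_compl hCX hKX heC heK)

lemma Perspective.closure_subset_closure (h : Perspective M M') (hE' : M'.E = univ) :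
    M.closure X ⊆ M'.closure X := by
  intro e he
  by_cases heX : e ∈ X
  · exact M'.mem_closure_of_mem' heX (by simp [hE'])
  by_contra he'
  obtain ⟨K, hK, heK, hKX⟩ := (notMem_closure_iff_exists_isCocircuit (by simp [hE'])).1 he'
  obtain ⟨C, hCX, hC, heC⟩ := exists_isCircuit_of_mem_closure he heX
  have hCK := inter_eq_singleton_of_subset_insert_of_subset_compl hCX hKX heC heK
  exact h C K ((isCircuit_iff_matroid_isCircuit hC.subset_ground).2 hC)
    ((isCocircuit_iff_matroid_isCocircuit hK.subset_ground).2 hK) (by simp [hCK])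

lemma Perspective.closure_eq_closure_of_closure_eq (h : Perspective M M') (hE : M.E = univ)
    (hE' : M'.E = univ) (hXY : M.closure X = M.closure Y) : M'.closure X = M'.closure Y := by
  have key : ∀ {X Y : Set α}, M.closure X = M.closure Y → M'.closure X ⊆ M'.closure Y :=
    fun {X Y} hXY => closure_subset_closure_of_subset_closure <|
      (M.subset_closure X (by simp [hE])).trans (hXY ▸ h.closure_subset_closure hE')
  exact (key hXY).antisymm (key hXY.symm)

section LinearOrder

variable [LinearOrder α]

lemma smallestIn_and_subset_insert_iff :
    SmallestIn e C ∧ C ⊆ insert e X ↔ e ∈ C ∧ C ⊆ insert e (X ∩ Ioi e) := by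
  constructor
  · rintro ⟨⟨heC, hmin⟩, hCX⟩
    refine ⟨heC, fun f hf => ?_⟩
    rcases eq_or_ne f e with rfl | hfe
    · exact mem_insert f _
    · exact Or.inr ⟨(hCX hf).resolve_left hfe, lt_of_le_of_ne (hmin f hf) hfe.symm⟩
  · rintro ⟨heC, hCX⟩
    refine ⟨⟨heC, fun f hf => ?_⟩, hCX.trans (insert_subset_insert inter_subset_left)⟩
    rcases hCX hf with rfl | hf
    exacts [le_rfl, hf.2.le]

lemma exists_isCircuit_smallestIn_iff (hE : M.E = univ) :
    (∃ C, IsCircuit M C ∧ C ⊆ insert e X ∧ SmallestIn e C) ↔ e ∈ M.closure (X ∩ Ioi e) := by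
  rw [mem_closure_iff_exists_isCircuit (fun he => lt_irrefl e he.2)]
  simp only [isCircuit_iff_matroid_isCircuit (hE ▸ subset_univ _)]
  refine exists_congr fun C => ?_
  rw [and_comm (a := C ⊆ insert e X), smallestIn_and_subset_insert_iff]
  tauto

lemma insert_compl_inter_Ioi (A : Set α) (e : α) :
    insert e (Aᶜ ∩ Ioi e) = (A ∩ Ioi e ∪ Iio e)ᶜ := by
  ext f
  simp only [mem_insert_iff, mem_inter_iff, mem_compl_iff, mem_Ioi, mem_union, mem_Iio]
  grind

lemma exists_isCocircuit_smallestIn_iff (hE : M.E = univ) :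
    (∃ K, IsCocircuit M K ∧ K ⊆ insert e Aᶜ ∧ SmallestIn e K) ↔
      e ∉ M.closure (A ∩ Ioi e ∪ Iio e) := by
  rw [notMem_closure_iff_exists_isCocircuit (by simp [hE]), ← insert_compl_inter_Ioi]
  simp only [isCocircuit_iff_matroid_isCocircuit (hE ▸ subset_univ _)]
  refine exists_congr fun K => ?_
  rw [and_comm (a := K ⊆ insert e Aᶜ), smallestIn_and_subset_insert_iff]

def spannedAbove (M : Matroid α) (A : Set α) : Set α :=
  {e | e ∈ M.closure (A ∩ Ioi e)}

lemma mem_spannedAbove : e ∈ spannedAbove M A ↔ e ∈ M.closure (A ∩ Ioi e) := Iff.rfl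

lemma Qset_eq_inter_spannedAbove (hE : M.E = univ) : Qset M A = A ∩ spannedAbove M A := by
  ext e
  refine and_congr_right fun he => ?_
  rw [mem_spannedAbove, ← exists_isCircuit_smallestIn_iff hE, insert_eq_of_mem he]

lemma ExtSet_eq_spannedAbove_sdiff (hE : M.E = univ) : ExtSet M A = spannedAbove M A \ A := by
  ext e
  refine and_comm.trans (and_congr_left fun _ => ?_)
  rw [mem_spannedAbove, ← exists_isCircuit_smallestIn_iff hE, union_singleton]

lemma mem_Pset_iff (hE : M.E = univ) :
    e ∈ Pset M A ↔ e ∉ A ∧ e ∉ M.closure (A ∩ Ioi e ∪ Iio e) := by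
  refine and_congr_right fun he => ?_
  rw [← exists_isCocircuit_smallestIn_iff hE, insert_eq_of_mem (mem_compl he)]

lemma mem_IntSet_iff (hE : M.E = univ) :
    e ∈ IntSet M A ↔ e ∈ A ∧ e ∉ M.closure (A ∩ Ioi e ∪ Iio e) := by
  refine and_congr_right fun _ => ?_
  rw [← exists_isCocircuit_smallestIn_iff hE, union_singleton]

lemma sdiff_Qset_union_ExtSet (hE : M.E = univ) :
    (A \ Qset M A) ∪ ExtSet M A = symmDiff A (spannedAbove M A) := by
  rw [Qset_eq_inter_spannedAbove hE, ExtSet_eq_spannedAbove_sdiff hE, sdiff_self_inter,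
    Set.symmDiff_def]

lemma inter_Ioi_subset_closure_of_subset_union_spannedAbove (hX : X ⊆ M.E)
    (hY : Y ⊆ X ∪ spannedAbove M X) (e : α) : Y ∩ Ioi e ⊆ M.closure (X ∩ Ioi e) := by
  rintro f ⟨hfY, hef⟩
  rcases hY hfY with hfX | hfS
  · exact M.mem_closure_of_mem' ⟨hfX, hef⟩ (hX hfX)
  · exact M.closure_subset_closure (inter_subset_inter_right X (Ioi_subset_Ioi hef.le)) hfS

lemma closure_sdiff_spannedAbove_inter_Ioi [WellFoundedGT α] (hX : X ⊆ M.E) (e : α) :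
    M.closure ((X \ spannedAbove M X) ∩ Ioi e) = M.closure (X ∩ Ioi e) := by
  induction e using WellFoundedGT.induction with
  | _ e ih =>
    refine (M.closure_subset_closure (inter_subset_inter_left _ sdiff_subset)).antisymm
      (closure_subset_closure_of_subset_closure ?_)
    rintro f ⟨hfX, hef⟩
    by_cases hfS : f ∈ spannedAbove M X
    · have hf : f ∈ M.closure ((X \ spannedAbove M X) ∩ Ioi f) := (ih f hef).symm ▸ hfS
      exact M.closure_subset_closure (inter_subset_inter_right _ (Ioi_subset_Ioi hef.le)) hf
    · exact M.mem_closure_of_mem' ⟨⟨hfX, hfS⟩, hef⟩ (hX hfX)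

lemma closure_symmDiff_spannedAbove_inter_Ioi [WellFoundedGT α] (hA : A ⊆ M.E) (e : α) :
    M.closure (symmDiff A (spannedAbove M A) ∩ Ioi e) = M.closure (A ∩ Ioi e) := by
  refine (closure_subset_closure_of_subset_closure
    (inter_Ioi_subset_closure_of_subset_union_spannedAbove hA symmDiff_subset_union e)).antisymm ?_
  rw [← closure_sdiff_spannedAbove_inter_Ioi hA e, Set.symmDiff_def]
  exact M.closure_subset_closure (inter_subset_inter_left _ subset_union_left)

lemma spannedAbove_symmDiff_spannedAbove [WellFoundedGT α] (hA : A ⊆ M.E) :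
    spannedAbove M (symmDiff A (spannedAbove M A)) = spannedAbove M A := by
  ext e
  rw [mem_spannedAbove, mem_spannedAbove, closure_symmDiff_spannedAbove_inter_Ioi hA]

lemma Perspective.mem_symmDiff_spannedAbove_iff (h : Perspective M M') (hE' : M'.E = univ)
    (he : e ∉ M'.closure (A ∩ Ioi e ∪ Iio e)) : e ∈ symmDiff A (spannedAbove M A) ↔ e ∈ A := by
  have hS : e ∉ spannedAbove M A := fun hS =>
    he (M'.closure_subset_closure subset_union_left (h.closure_subset_closure hE' hS))
  simp [mem_symmDiff, hS]

end LinearOrder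

end

theorem duality_involution {α : Type*} [Fintype α] [LinearOrder α]
    (M M' : Matroid α) (hE : M.E = Set.univ) (hE' : M'.E = Set.univ)
    (h : Perspective M M') (A : Set α) :
    Pset M' ((A \ Qset M A) ∪ ExtSet M A) = Pset M' A ∧
    IntSet M' ((A \ Qset M A) ∪ ExtSet M A) = IntSet M' A ∧
    Qset M ((A \ Qset M A) ∪ ExtSet M A) = ExtSet M A ∧
    ExtSet M ((A \ Qset M A) ∪ ExtSet M A) = Qset M A ∧
    ((((A \ Qset M A) ∪ ExtSet M A) \ Qset M ((A \ Qset M A) ∪ ExtSet M A)) ∪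
        ExtSet M ((A \ Qset M A) ∪ ExtSet M A)) = A := by
  have hA : A ⊆ M.E := hE ▸ subset_univ A
  have hclosure' (e : α) : M'.closure (symmDiff A (spannedAbove M A) ∩ Ioi e ∪ Iio e) =
      M'.closure (A ∩ Ioi e ∪ Iio e) :=
    closure_union_congr_left <| h.closure_eq_closure_of_closure_eq hE hE' <|
      closure_symmDiff_spannedAbove_inter_Ioi hA e
  rw [sdiff_Qset_union_ExtSet hE]
  simp only [Qset_eq_inter_spannedAbove hE, ExtSet_eq_spannedAbove_sdiff hE,
    spannedAbove_symmDiff_spannedAbove hA]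
  refine ⟨?_, ?_, ?_, ?_, ?_⟩
  · ext e
    rw [mem_Pset_iff hE', mem_Pset_iff hE', hclosure']
    exact and_congr_left fun he => not_congr (h.mem_symmDiff_spannedAbove_iff hE' he)
  · ext e
    rw [mem_IntSet_iff hE', mem_IntSet_iff hE', hclosure']
    exact and_congr_left fun he => h.mem_symmDiff_spannedAbove_iff hE' he
  all_goals ext e; simp only [mem_symmDiff, mem_inter_iff, mem_sdiff, mem_union]; tauto
end
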